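/- Let Φ(S) = 4·(s₂₂/(s₁₁s₂₂ − s₁₂² + s₂₂²))² · (1/s₃₃) viewed as a rational function of (s₁₁,s₁₂,s₂₂,s₃₃). Setting K = −∇ log Φ (with off-diagonal derivative convention (∇f)₁₂ = (1/2)∂f/∂s₁₂, and with κ₁₃ = κ₂₃ = 0), the 3×3 determinant κ₃₃(κ₁₁κ₂₂ − κ₁₂²) equals Φ(S) as rational functions. -/

import Mathlib

/-!
As a function of any single variable, `Φ` has the shape `c · (u/v)² · (1/w)`, so its logarithmic
partial derivatives are `2(u'/u − v'/v) − w'/w`. With `D = s₁₁s₂₂ − s₁₂² + s₂₂²` this gives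
`κ₁₁ = 2s₂₂/D`, `κ₁₂ = −2s₁₂/D`, `κ₂₂ = 2(s₁₁ + 2s₂₂)/D − 2/s₂₂` and `κ₃₃ = 1/s₃₃`, hence
`κ₁₁κ₂₂ − κ₁₂² = (4s₁₁s₂₂ + 8s₂₂² − 4s₁₂² − 4D)/D² = 4s₂₂²/D²`, and multiplying by `κ₃₃` gives `Φ`.
-/

/-- `Φ(S) = 4·(s₂₂/(s₁₁s₂₂ − s₁₂² + s₂₂²))² · (1/s₃₃)`. -/
noncomputable def Phi13 (s11 s12 s22 s33 : ℂ) : ℂ :=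
  4 * (s22 / (s11 * s22 - s12 ^ 2 + s22 ^ 2)) ^ 2 * (1 / s33)

section LogDeriv

variable {𝕜 : Type*} [NontriviallyNormedField 𝕜] {f u v w : 𝕜 → 𝕜} {f' u' v' w' x : 𝕜}

theorem HasDerivAt.logDeriv_eq (hf : HasDerivAt f f' x) : logDeriv f x = f' / f x := by
  rw [logDeriv_apply, hf.deriv]

theorem logDeriv_const_mul_div_pow_mul_one_div {c : 𝕜} (n : ℕ) (hc : c ≠ 0)
    (hu : HasDerivAt u u' x) (hv : HasDerivAt v v' x) (hw : HasDerivAt w w' x)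
    (hu0 : u x ≠ 0) (hv0 : v x ≠ 0) (hw0 : w x ≠ 0) :
    logDeriv (fun t => c * (u t / v t) ^ n * (1 / w t)) x
      = n * (u' / u x - v' / v x) - w' / w x := by
  have hquot : DifferentiableAt 𝕜 (fun t => u t / v t) x :=
    hu.differentiableAt.div hv.differentiableAt hv0
  have hinv : DifferentiableAt 𝕜 (fun t => 1 / w t) x :=
    (differentiableAt_const 1).div hw.differentiableAt hw0
  rw [logDeriv_mul (f := fun t => c * (u t / v t) ^ n) x (by simp [hc, hu0, hv0])
      (by simp [hw0]) (by fun_prop) hinv,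
    logDeriv_const_mul x c hc, logDeriv_fun_pow hquot,
    logDeriv_div x hu0 hv0 hu.differentiableAt hv.differentiableAt,
    logDeriv_div (f := fun _ => 1) x one_ne_zero hw0 (differentiableAt_const 1)
      hw.differentiableAt,
    logDeriv_const, Pi.zero_apply, hu.logDeriv_eq, hv.logDeriv_eq, hw.logDeriv_eq]
  ring

end LogDeriv

section Phi13

variable {s11 s12 s22 s33 : ℂ}

theorem logDeriv_Phi13_s11 (hD : s11 * s22 - s12 ^ 2 + s22 ^ 2 ≠ 0) (h22 : s22 ≠ 0)
    (h33 : s33 ≠ 0) :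
    logDeriv (fun t => Phi13 t s12 s22 s33) s11
      = -(2 * s22 / (s11 * s22 - s12 ^ 2 + s22 ^ 2)) := by
  have hv : HasDerivAt (fun t => t * s22 - s12 ^ 2 + s22 ^ 2) s22 s11 := by
    simpa using ((hasDerivAt_id s11).mul_const s22).sub_const (s12 ^ 2) |>.add_const (s22 ^ 2)
  unfold Phi13
  rw [logDeriv_const_mul_div_pow_mul_one_div 2 (u := fun _ => s22) (w := fun _ => s33)
    (by norm_num) (hasDerivAt_const _ _) hv (hasDerivAt_const _ _) h22 hD h33]
  ring

theorem logDeriv_Phi13_s12 (hD : s11 * s22 - s12 ^ 2 + s22 ^ 2 ≠ 0) (h22 : s22 ≠ 0)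
    (h33 : s33 ≠ 0) :
    logDeriv (fun t => Phi13 s11 t s22 s33) s12
      = 4 * s12 / (s11 * s22 - s12 ^ 2 + s22 ^ 2) := by
  have hv : HasDerivAt (fun t => s11 * s22 - t ^ 2 + s22 ^ 2) (-(2 * s12)) s12 := by
    simpa using ((hasDerivAt_pow 2 s12).const_sub (s11 * s22)).add_const (s22 ^ 2)
  unfold Phi13
  rw [logDeriv_const_mul_div_pow_mul_one_div 2 (u := fun _ => s22) (w := fun _ => s33)
    (by norm_num) (hasDerivAt_const _ _) hv (hasDerivAt_const _ _) h22 hD h33]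
  ring

theorem logDeriv_Phi13_s22 (hD : s11 * s22 - s12 ^ 2 + s22 ^ 2 ≠ 0) (h22 : s22 ≠ 0)
    (h33 : s33 ≠ 0) :
    logDeriv (fun t => Phi13 s11 s12 t s33) s22
      = 2 / s22 - 2 * (s11 + 2 * s22) / (s11 * s22 - s12 ^ 2 + s22 ^ 2) := by
  have hv : HasDerivAt (fun t => s11 * t - s12 ^ 2 + t ^ 2) (s11 + 2 * s22) s22 := by
    simpa using (((hasDerivAt_id s22).const_mul s11).sub_const (s12 ^ 2)).fun_add
      (hasDerivAt_pow 2 s22)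
  unfold Phi13
  rw [logDeriv_const_mul_div_pow_mul_one_div 2 (u := fun t => t) (w := fun _ => s33)
    (by norm_num) (hasDerivAt_id' _) hv (hasDerivAt_const _ _) h22 hD h33]
  ring

theorem logDeriv_Phi13_s33 (hD : s11 * s22 - s12 ^ 2 + s22 ^ 2 ≠ 0) (h22 : s22 ≠ 0)
    (h33 : s33 ≠ 0) :
    logDeriv (fun t => Phi13 s11 s12 s22 t) s33 = -(1 / s33) := by
  unfold Phi13
  rw [logDeriv_const_mul_div_pow_mul_one_div 2 (u := fun _ => s22)
    (v := fun _ => s11 * s22 - s12 ^ 2 + s22 ^ 2) (by norm_num) (hasDerivAt_const _ _)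
    (hasDerivAt_const _ _) (hasDerivAt_id' _) h22 hD h33]
  ring

end Phi13

/-- With `K = −∇ log Φ` (off-diagonal convention `(∇f)₁₂ = (1/2)∂f/∂s₁₂`, and
`κ₁₃ = κ₂₃ = 0`), the 3×3 determinant `κ₃₃(κ₁₁κ₂₂ − κ₁₂²)` equals `Φ(S)`. -/
theorem block_diagonal_homaloidal (s11 s12 s22 s33 : ℂ)
    (hD : s11 * s22 - s12 ^ 2 + s22 ^ 2 ≠ 0) (h22 : s22 ≠ 0) (h33 : s33 ≠ 0) :
    let Φ := Phi13 s11 s12 s22 s33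
    let κ11 := -(deriv (fun t => Phi13 t s12 s22 s33) s11) / Φ
    let κ12 := -((1 / 2 : ℂ) * deriv (fun t => Phi13 s11 t s22 s33) s12) / Φ
    let κ22 := -(deriv (fun t => Phi13 s11 s12 t s33) s22) / Φ
    let κ33 := -(deriv (fun t => Phi13 s11 s12 s22 t) s33) / Φ
    κ33 * (κ11 * κ22 - κ12 ^ 2) = Φ := by
  intro Φ κ11 κ12 κ22 κ33
  have e11 : κ11 = -logDeriv (fun t => Phi13 t s12 s22 s33) s11 := neg_div _ _
  have e12 : κ12 = -(1 / 2 * logDeriv (fun t => Phi13 s11 t s22 s33) s12) :=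
    (neg_div _ _).trans (congrArg Neg.neg (mul_div_assoc _ _ _))
  have e22 : κ22 = -logDeriv (fun t => Phi13 s11 s12 t s33) s22 := neg_div _ _
  have e33 : κ33 = -logDeriv (fun t => Phi13 s11 s12 s22 t) s33 := neg_div _ _
  rw [e11, e12, e22, e33, logDeriv_Phi13_s11 hD h22 h33, logDeriv_Phi13_s12 hD h22 h33,
    logDeriv_Phi13_s22 hD h22 h33, logDeriv_Phi13_s33 hD h22 h33]
  unfold Φ Phi13
  set D := s11 * s22 - s12 ^ 2 + s22 ^ 2 with hD_def
  field_simp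
  rw [hD_def]
  ring
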